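/- Assume that C is symmetrizable with positive symmetrizer d_1,…,d_r (d_jC_{jk} = d_kC_{kj}), that C is invertible over ℚ, and that the Coxeter graph of C (the graph on {1,…,r} with an edge {j,k} whenever j ≠ k and C_{jk} ≠ 0) is a forest. Let D̃ be the diagonal Ĩ×Ĩ matrix with D̃_{a,a} = d_{|a|}. Then for every Coxeter double word 𝐢 the matrix B̃_𝐢 is invertible, and the unique matrix Λ with Λ·B̃_𝐢 = −D̃, namely Λ = −D̃·(B̃_𝐢)^{−1}, satisfies Λ_{j,k} − Λ_{−j,k} − Λ_{j,−k} + Λ_{−j,−k} = 0 for all j, k ∈ {1,…,r} (Corollary 3.16). -/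

import Mathlib

open Classical

noncomputable section

/-- The indicator `δ_P` of a proposition, as a rational number. -/
def dd (P : Prop) : ℚ := if P then 1 else 0

/-- The exchange matrix `B̃_𝐢`, as a function of `a b : ℤ` (the meaningful entries are
those with `a, b ∈ Ĩ = {-r,…,-1,1,…,r}`).  Here `C` is the (generalized Cartan) matrix,
`jm j = j₋`, `jp j = j₊` and `eps j = ε_j`. -/
def Btilde (C : ℕ → ℕ → ℤ) (jm jp : ℕ → ℕ) (eps : ℕ → ℚ) (a b : ℤ) : ℚ :=
  (C a.natAbs b.natAbs : ℚ) / 2 *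
    (if a < 0 then
      (if b < 0 then
        eps b.natAbs * (dd (jm a.natAbs < jm b.natAbs ∧ jm b.natAbs < jp a.natAbs)
            + dd (jm a.natAbs < jp b.natAbs ∧ jp b.natAbs < jp a.natAbs))
          - eps a.natAbs * (dd (jm b.natAbs < jm a.natAbs ∧ jm a.natAbs < jp b.natAbs)
            + dd (jm b.natAbs < jp a.natAbs ∧ jp a.natAbs < jp b.natAbs))
      else
        -(eps a.natAbs * (2 * dd (a.natAbs = b.natAbs) + dd (jm a.natAbs < jm b.natAbs)
            + dd (jp a.natAbs < jm b.natAbs) + dd (jp b.natAbs < jm a.natAbs)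
            + dd (jp b.natAbs < jp a.natAbs))
          + eps b.natAbs * (dd (jm a.natAbs < jm b.natAbs ∧ jm b.natAbs < jp a.natAbs)
            + dd (jm a.natAbs < jp b.natAbs ∧ jp b.natAbs < jp a.natAbs))))
    else
      (if b < 0 then
        eps b.natAbs * (2 * dd (a.natAbs = b.natAbs) + dd (jm b.natAbs < jm a.natAbs)
            + dd (jp b.natAbs < jm a.natAbs) + dd (jp a.natAbs < jm b.natAbs)
            + dd (jp a.natAbs < jp b.natAbs))
          + eps a.natAbs * (dd (jm b.natAbs < jm a.natAbs ∧ jm a.natAbs < jp b.natAbs)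
            + dd (jm b.natAbs < jp a.natAbs ∧ jp a.natAbs < jp b.natAbs))
      else
        eps a.natAbs * (dd (jm a.natAbs < jm b.natAbs) + dd (jp a.natAbs < jm b.natAbs)
            + dd (jp b.natAbs < jm a.natAbs) + dd (jp b.natAbs < jp a.natAbs))
          - eps b.natAbs * (dd (jm b.natAbs < jm a.natAbs) + dd (jp b.natAbs < jm a.natAbs)
            + dd (jp a.natAbs < jm b.natAbs) + dd (jp a.natAbs < jp b.natAbs))))

/-- `w` is a Coxeter double word: the positions `1,…,2r` are mapped bijectively onto
`Ĩ = {-r,…,-1,1,…,r}`. -/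
def IsCoxWord (r : ℕ) (w : ℕ → ℤ) : Prop :=
  (∀ m, 1 ≤ m → m ≤ 2 * r → w m ≠ 0 ∧ (w m).natAbs ≤ r) ∧
    ∀ a : ℤ, a ≠ 0 → a.natAbs ≤ r → ∃! m, 1 ≤ m ∧ m ≤ 2 * r ∧ w m = a

/-- `jm j = j₋ < j₊ = jp j` are the two positions of the word `w` carrying a letter of
absolute value `j`, and `eps j = ε_j = 1` if `w j₋ > 0` and `-1` otherwise. -/
def PosData (r : ℕ) (w : ℕ → ℤ) (jm jp : ℕ → ℕ) (eps : ℕ → ℚ) : Prop :=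
  ∀ j, 1 ≤ j → j ≤ r →
    1 ≤ jm j ∧ jm j < jp j ∧ jp j ≤ 2 * r ∧
      (w (jm j)).natAbs = j ∧ (w (jp j)).natAbs = j ∧
      eps j = (if 0 < w (jm j) then 1 else -1)

/-- `C` is an `r × r` generalized Cartan matrix (on the indices `1,…,r`). -/
def IsGCM (r : ℕ) (C : ℕ → ℕ → ℤ) : Prop :=
  (∀ j, 1 ≤ j → j ≤ r → C j j = 2) ∧
    (∀ j k, 1 ≤ j → j ≤ r → 1 ≤ k → k ≤ r → j ≠ k → C j k ≤ 0) ∧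
    (∀ j k, 1 ≤ j → j ≤ r → 1 ≤ k → k ≤ r → (C j k = 0 ↔ C k j = 0))

/-- Matrix mutation at the index `m`:
`μ_m(B)_{a,b} = -B_{a,b}` if `a = m` or `b = m`, and otherwise
`μ_m(B)_{a,b} = B_{a,b} + sgn(B_{a,m})·max(B_{a,m}·B_{m,b}, 0)`. -/
def mutB (m : ℤ) (B : ℤ → ℤ → ℚ) : ℤ → ℤ → ℚ := fun a b =>
  if a = m ∨ b = m then -B a b
  else B a b +
    (if 0 < B a m then (1 : ℚ) else if B a m < 0 then -1 else 0) * max (B a m * B m b) 0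

/-- The Coxeter graph of `C`: the (simple) graph on `{1,…,r}` with an edge `{j,k}`
whenever `j ≠ k` and `C_{jk} ≠ 0` (equivalently, by the GCM axioms, `C_{kj} ≠ 0`). -/
def coxGraph (r : ℕ) (C : ℕ → ℕ → ℤ) : SimpleGraph ℕ where
  Adj j k := j ≠ k ∧ 1 ≤ j ∧ j ≤ r ∧ 1 ≤ k ∧ k ≤ r ∧ (C j k ≠ 0 ∨ C k j ≠ 0)
  symm := by
    refine ⟨?_⟩
    rintro j k ⟨h1, h2, h3, h4, h5, h6⟩
    exact ⟨h1.symm, h4, h5, h2, h3, h6.symm⟩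
  loopless := by
    refine ⟨?_⟩
    intro j h
    exact h.1 rfl

/-- The enumeration `Fin (2r) → Ĩ`, `m ↦ -(m+1)` for `m < r` and `m ↦ m - r + 1` for
`m ≥ r`. -/
def iotaI (r : ℕ) (m : Fin (2 * r)) : ℤ :=
  if (m : ℕ) < r then -(((m : ℕ) : ℤ) + 1) else (((m : ℕ) - r : ℕ) : ℤ) + 1

/-! Fold the index set `Ĩ` onto `{1,…,r}` by `±l ↦ l`. Since the letters `j` and `l` of a
Coxeter double word occupy disjoint pairs of positions, the entries of `B̃_𝐢` add up over a fold
to `±ε_j C_{jl}` or `ε_l C_{jl}`. In block form along `Ĩ = -{1,…,r} ⊔ {1,…,r}` this means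
`B̃_𝐢 = [[P, -A - P], [A' - P, A - A' + P]]` with `A = E C`, `A' = C E`, `E = diag(ε)`, for some
block `P`. Such a matrix is invertible as soon as `C` is, with the explicit inverse
`[[X + A'⁻¹ - A⁻¹, X + A'⁻¹], [X - A⁻¹, X]]`, `X = A⁻¹ P A'⁻¹`, whose alternating sum of the four
blocks vanishes. Multiplying by the diagonal matrix `-D̃` on the left scales the rows `-j` and `j`
by the same `d_j`, so this vanishing is exactly the claimed identity for `Λ`. -/

namespace Matrix

variable {n R : Type*} [Fintype n] [DecidableEq n] [CommRing R]

theorem fromBlocks_fold_mul_eq_one (P A A' : Matrix n n R) (hA : IsUnit A) (hA' : IsUnit A') :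
    fromBlocks P (-A - P) (A' - P) (A - A' + P) *
        fromBlocks (A⁻¹ * P * A'⁻¹ + A'⁻¹ - A⁻¹) (A⁻¹ * P * A'⁻¹ + A'⁻¹)
          (A⁻¹ * P * A'⁻¹ - A⁻¹) (A⁻¹ * P * A'⁻¹) = 1 := by
  have hAi : A * A⁻¹ = 1 := A.mul_nonsing_inv ((isUnit_iff_isUnit_det A).mp hA)
  have hA'i : A' * A'⁻¹ = 1 := A'.mul_nonsing_inv ((isUnit_iff_isUnit_det A').mp hA')
  have cancel : ∀ X, A * (A⁻¹ * X) = X := fun X => by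
    rw [← Matrix.mul_assoc, hAi, Matrix.one_mul]
  rw [fromBlocks_multiply, ← fromBlocks_one, fromBlocks_inj]
  refine ⟨?_, ?_, ?_, ?_⟩ <;>
    · simp only [mul_add, mul_sub, add_mul, sub_mul, neg_mul, Matrix.mul_assoc, cancel, hAi, hA'i]
      abel

theorem isUnit_fromBlocks_fold (P A A' : Matrix n n R) (hA : IsUnit A) (hA' : IsUnit A') :
    IsUnit (fromBlocks P (-A - P) (A' - P) (A - A' + P)) :=
  IsUnit.of_mul_eq_one _ (fromBlocks_fold_mul_eq_one P A A' hA hA')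

theorem inv_fromBlocks_fold_apply (P A A' : Matrix n n R) (hA : IsUnit A) (hA' : IsUnit A')
    (i j : n) :
    let N := (fromBlocks P (-A - P) (A' - P) (A - A' + P))⁻¹
    N (.inr i) (.inr j) - N (.inl i) (.inr j) - N (.inr i) (.inl j) + N (.inl i) (.inl j) = 0 := by
  simp only [inv_eq_right_inv (fromBlocks_fold_mul_eq_one P A A' hA hA'), fromBlocks_apply₁₁,
    fromBlocks_apply₁₂, fromBlocks_apply₂₁, fromBlocks_apply₂₂, add_apply, sub_apply]
  abel

end Matrix

theorem dd_lt_add_dd_between_add_dd_gt {x a b : ℕ} (hab : a < b) (hxa : x ≠ a) (hxb : x ≠ b) :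
    dd (x < a) + dd (a < x ∧ x < b) + dd (b < x) = 1 := by
  unfold dd
  split_ifs <;> first | (exfalso; omega) | norm_num

section Fold

variable (C : ℕ → ℕ → ℤ) (eps : ℕ → ℚ) {jm jp : ℕ → ℕ} {j l : ℕ}

theorem Btilde_pos_pos_add_pos_neg (hl : 1 ≤ l) (hll : jm l < jp l)
    (hsep : j ≠ l → jm j ≠ jm l ∧ jm j ≠ jp l ∧ jp j ≠ jm l ∧ jp j ≠ jp l) :
    Btilde C jm jp eps j l + Btilde C jm jp eps j (-l) = eps j * C j l := by
  simp only [Btilde, if_neg (Int.natCast_nonneg j).not_gt, if_neg (Int.natCast_nonneg l).not_gt,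
    if_pos (show -(l : ℤ) < 0 by omega), Int.natAbs_neg, Int.natAbs_natCast]
  rcases eq_or_ne j l with rfl | hjl
  · simp only [dd]
    split_ifs <;> first | (exfalso; omega) | ring1
  · obtain ⟨h₁, h₂, h₃, h₄⟩ := hsep hjl
    have t₁ := dd_lt_add_dd_between_add_dd_gt hll h₁ h₂
    have t₂ := dd_lt_add_dd_between_add_dd_gt hll h₃ h₄
    have hd : dd (j = l) = 0 := if_neg hjl
    linear_combination (C j l / 2 : ℚ) * eps j * (t₁ + t₂) + (C j l : ℚ) * eps l * hd

theorem Btilde_neg_pos_add_neg_neg (hj : 1 ≤ j) (hl : 1 ≤ l) (hll : jm l < jp l)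
    (hsep : j ≠ l → jm j ≠ jm l ∧ jm j ≠ jp l ∧ jp j ≠ jm l ∧ jp j ≠ jp l) :
    Btilde C jm jp eps (-j) l + Btilde C jm jp eps (-j) (-l) = -eps j * C j l := by
  simp only [Btilde, if_pos (show -(j : ℤ) < 0 by omega), if_neg (Int.natCast_nonneg l).not_gt,
    if_pos (show -(l : ℤ) < 0 by omega), Int.natAbs_neg, Int.natAbs_natCast]
  rcases eq_or_ne j l with rfl | hjl
  · simp only [dd]
    split_ifs <;> first | (exfalso; omega) | ring1
  · obtain ⟨h₁, h₂, h₃, h₄⟩ := hsep hjl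
    have t₁ := dd_lt_add_dd_between_add_dd_gt hll h₁ h₂
    have t₂ := dd_lt_add_dd_between_add_dd_gt hll h₃ h₄
    have hd : dd (j = l) = 0 := if_neg hjl
    linear_combination (-C j l / 2 : ℚ) * eps j * (t₁ + t₂) - (C j l : ℚ) * eps j * hd

theorem Btilde_pos_neg_add_neg_neg (hj : 1 ≤ j) (hl : 1 ≤ l) (hjj : jm j < jp j)
    (hsep : j ≠ l → jm j ≠ jm l ∧ jm j ≠ jp l ∧ jp j ≠ jm l ∧ jp j ≠ jp l) :
    Btilde C jm jp eps j (-l) + Btilde C jm jp eps (-j) (-l) = eps l * C j l := by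
  simp only [Btilde, if_pos (show -(j : ℤ) < 0 by omega), if_neg (Int.natCast_nonneg j).not_gt,
    if_pos (show -(l : ℤ) < 0 by omega), Int.natAbs_neg, Int.natAbs_natCast]
  rcases eq_or_ne j l with rfl | hjl
  · simp only [dd]
    split_ifs <;> first | (exfalso; omega) | ring1
  · obtain ⟨h₁, h₂, h₃, h₄⟩ := hsep hjl
    have t₁ := dd_lt_add_dd_between_add_dd_gt hjj h₁.symm h₃.symm
    have t₂ := dd_lt_add_dd_between_add_dd_gt hjj h₂.symm h₄.symm
    have hd : dd (j = l) = 0 := if_neg hjl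
    linear_combination (C j l / 2 : ℚ) * eps l * (t₁ + t₂) + (C j l : ℚ) * eps l * hd

end Fold

section ExchangeMatrix

open Matrix

variable {r : ℕ}

def negPosEquiv (r : ℕ) : Fin r ⊕ Fin r ≃ Fin (2 * r) :=
  finSumFinEquiv.trans (finCongr (two_mul r).symm)

@[simp]
theorem negPosEquiv_inl_val (p : Fin r) : (negPosEquiv r (.inl p) : ℕ) = p := by
  simp [negPosEquiv]

@[simp]
theorem negPosEquiv_inr_val (p : Fin r) : (negPosEquiv r (.inr p) : ℕ) = r + p := by
  simp [negPosEquiv, add_comm]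

theorem mk_sub_one_eq_negPosEquiv_inl {j : ℕ} (hj1 : 1 ≤ j) (hj2 : j ≤ r) (h : j - 1 < 2 * r) :
    (⟨j - 1, h⟩ : Fin (2 * r)) = negPosEquiv r (.inl ⟨j - 1, by omega⟩) :=
  Fin.ext (negPosEquiv_inl_val _).symm

theorem mk_add_sub_one_eq_negPosEquiv_inr {j : ℕ} (hj1 : 1 ≤ j) (hj2 : j ≤ r)
    (h : r + j - 1 < 2 * r) :
    (⟨r + j - 1, h⟩ : Fin (2 * r)) = negPosEquiv r (.inr ⟨j - 1, by omega⟩) :=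
  Fin.ext (by simp; omega)

theorem iotaI_negPosEquiv_inl (p : Fin r) :
    iotaI r (negPosEquiv r (.inl p)) = -((p + 1 : ℕ) : ℤ) := by
  simp [iotaI]

theorem iotaI_negPosEquiv_inr (p : Fin r) :
    iotaI r (negPosEquiv r (.inr p)) = ((p + 1 : ℕ) : ℤ) := by
  simp [iotaI]

def cartanMatrix (r : ℕ) (C : ℕ → ℕ → ℤ) : Matrix (Fin r) (Fin r) ℚ :=
  of fun p q => (C (p + 1) (q + 1) : ℚ)

def signMatrix (r : ℕ) (eps : ℕ → ℚ) : Matrix (Fin r) (Fin r) ℚ :=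
  diagonal fun p => eps (p + 1)

def exchangeMatrix (r : ℕ) (C : ℕ → ℕ → ℤ) (jm jp : ℕ → ℕ) (eps : ℕ → ℚ) :
    Matrix (Fin (2 * r)) (Fin (2 * r)) ℚ :=
  of fun p q => Btilde C jm jp eps (iotaI r p) (iotaI r q)

variable {C : ℕ → ℕ → ℤ} {w : ℕ → ℤ} {jm jp : ℕ → ℕ} {eps : ℕ → ℚ}

theorem PosData.jm_lt_jp (hpos : PosData r w jm jp eps) {j : ℕ} (hj1 : 1 ≤ j) (hj2 : j ≤ r) :
    jm j < jp j :=
  (hpos j hj1 hj2).2.1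

theorem PosData.eps_ne_zero (hpos : PosData r w jm jp eps) {j : ℕ} (hj1 : 1 ≤ j)
    (hj2 : j ≤ r) : eps j ≠ 0 := by
  rw [(hpos j hj1 hj2).2.2.2.2.2]
  split_ifs <;> norm_num

theorem PosData.positions_ne (hpos : PosData r w jm jp eps) {j l : ℕ} (hj1 : 1 ≤ j)
    (hj2 : j ≤ r) (hl1 : 1 ≤ l) (hl2 : l ≤ r) :
    j ≠ l → jm j ≠ jm l ∧ jm j ≠ jp l ∧ jp j ≠ jm l ∧ jp j ≠ jp l := by
  obtain ⟨-, -, -, hjm, hjp, -⟩ := hpos j hj1 hj2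
  obtain ⟨-, -, -, hlm, hlp, -⟩ := hpos l hl1 hl2
  intro hjl
  refine ⟨?_, ?_, ?_, ?_⟩ <;> intro h <;> apply hjl
  · rw [← hjm, h, hlm]
  · rw [← hjm, h, hlp]
  · rw [← hjp, h, hlm]
  · rw [← hjp, h, hlp]

theorem exchangeMatrix_submatrix_negPosEquiv (hpos : PosData r w jm jp eps) :
    ∃ P, (exchangeMatrix r C jm jp eps).submatrix (negPosEquiv r) (negPosEquiv r) =
      fromBlocks P (-(signMatrix r eps * cartanMatrix r C) - P)
        (cartanMatrix r C * signMatrix r eps - P)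
        (signMatrix r eps * cartanMatrix r C - cartanMatrix r C * signMatrix r eps + P) := by
  refine ⟨((exchangeMatrix r C jm jp eps).submatrix (negPosEquiv r) (negPosEquiv r)).toBlocks₁₁,
    ?_⟩
  ext (p | p) (q | q)
  all_goals
    have hp : 1 ≤ (p : ℕ) + 1 ∧ (p : ℕ) + 1 ≤ r := ⟨by omega, p.isLt⟩
    have hq : 1 ≤ (q : ℕ) + 1 ∧ (q : ℕ) + 1 ≤ r := ⟨by omega, q.isLt⟩
    have hlt_p := hpos.jm_lt_jp hp.1 hp.2
    have hlt_q := hpos.jm_lt_jp hq.1 hq.2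
    have hsep := hpos.positions_ne hp.1 hp.2 hq.1 hq.2
    simp only [submatrix_apply, toBlocks₁₁, exchangeMatrix, of_apply, fromBlocks_apply₁₁,
      fromBlocks_apply₁₂, fromBlocks_apply₂₁, fromBlocks_apply₂₂, Matrix.sub_apply, Matrix.add_apply,
      Matrix.neg_apply, signMatrix, cartanMatrix, diagonal_mul, mul_diagonal, iotaI_negPosEquiv_inl,
      iotaI_negPosEquiv_inr]
  · linear_combination Btilde_neg_pos_add_neg_neg C eps hp.1 hq.1 hlt_q hsep
  · linear_combination Btilde_pos_neg_add_neg_neg C eps hp.1 hq.1 hlt_p hsep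
  · linear_combination Btilde_pos_pos_add_pos_neg C eps hq.1 hlt_q hsep
      - Btilde_pos_neg_add_neg_neg C eps hp.1 hq.1 hlt_p hsep

end ExchangeMatrix

section ExchangeMatrixInverse

open Matrix

variable {r : ℕ} {C : ℕ → ℕ → ℤ} {w : ℕ → ℤ} {jm jp : ℕ → ℕ} {eps : ℕ → ℚ}

theorem PosData.isUnit_signMatrix (hpos : PosData r w jm jp eps) : IsUnit (signMatrix r eps) :=
  isUnit_diagonal.mpr <| Pi.isUnit_iff.mpr fun p => (hpos.eps_ne_zero (by omega) p.isLt).isUnit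

theorem isUnit_exchangeMatrix (hC : IsUnit (cartanMatrix r C)) (hpos : PosData r w jm jp eps) :
    IsUnit (exchangeMatrix r C jm jp eps) := by
  obtain ⟨P, hP⟩ := exchangeMatrix_submatrix_negPosEquiv (C := C) hpos
  rw [← isUnit_submatrix_equiv (negPosEquiv r) (negPosEquiv r), hP]
  exact isUnit_fromBlocks_fold _ _ _ (hpos.isUnit_signMatrix.mul hC) (hC.mul hpos.isUnit_signMatrix)

theorem exchangeMatrix_inv_fold_apply (hC : IsUnit (cartanMatrix r C))
    (hpos : PosData r w jm jp eps) (p q : Fin r) :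
    let N := (exchangeMatrix r C jm jp eps)⁻¹
    let e := negPosEquiv r
    N (e (.inr p)) (e (.inr q)) - N (e (.inl p)) (e (.inr q)) - N (e (.inr p)) (e (.inl q))
      + N (e (.inl p)) (e (.inl q)) = 0 := by
  obtain ⟨P, hP⟩ := exchangeMatrix_submatrix_negPosEquiv (C := C) hpos
  have hN : ∀ x y, (exchangeMatrix r C jm jp eps)⁻¹ (negPosEquiv r x) (negPosEquiv r y) =
      ((exchangeMatrix r C jm jp eps).submatrix (negPosEquiv r) (negPosEquiv r))⁻¹ x y := by
    intro x y
    rw [inv_submatrix_equiv, submatrix_apply]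
  simp only [hN, hP]
  exact inv_fromBlocks_fold_apply _ _ _ (hpos.isUnit_signMatrix.mul hC)
    (hC.mul hpos.isUnit_signMatrix) p q

end ExchangeMatrixInverse

/-- In the enumeration `iotaI`, the index `-j ∈ Ĩ` corresponds to `j - 1 : Fin (2r)` and
`j ∈ Ĩ` corresponds to `r + j - 1 : Fin (2r)`. -/
theorem stmt_19 (r : ℕ) (C : ℕ → ℕ → ℤ) (d : ℕ → ℚ)
    (hCinv : IsUnit (Matrix.of fun p q : Fin r => (C ((p : ℕ) + 1) ((q : ℕ) + 1) : ℚ)))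
    (w : ℕ → ℤ) (jm jp : ℕ → ℕ) (eps : ℕ → ℚ) (hpos : PosData r w jm jp eps) :
    let Bm : Matrix (Fin (2 * r)) (Fin (2 * r)) ℚ :=
      Matrix.of fun p q => Btilde C jm jp eps (iotaI r p) (iotaI r q)
    let Λ : Matrix (Fin (2 * r)) (Fin (2 * r)) ℚ :=
      -((Matrix.diagonal fun p => d (iotaI r p).natAbs) * Bm⁻¹)
    IsUnit Bm ∧
      ∀ (j k : ℕ) (hj1 : 1 ≤ j) (hj2 : j ≤ r) (hk1 : 1 ≤ k) (hk2 : k ≤ r),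
        Λ ⟨r + j - 1, by omega⟩ ⟨r + k - 1, by omega⟩
          - Λ ⟨j - 1, by omega⟩ ⟨r + k - 1, by omega⟩
          - Λ ⟨r + j - 1, by omega⟩ ⟨k - 1, by omega⟩
          + Λ ⟨j - 1, by omega⟩ ⟨k - 1, by omega⟩ = 0 := by
  intro Bm Λ
  refine ⟨isUnit_exchangeMatrix hCinv hpos, fun j k hj1 hj2 hk1 hk2 => ?_⟩
  have hΛ : ∀ x y, Λ (negPosEquiv r x) (negPosEquiv r y) =
      -(d (iotaI r (negPosEquiv r x)).natAbs *
        (exchangeMatrix r C jm jp eps)⁻¹ (negPosEquiv r x) (negPosEquiv r y)) := fun x y => by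
    simp only [Λ, Matrix.neg_apply, Matrix.diagonal_mul]
    rfl
  rw [mk_sub_one_eq_negPosEquiv_inl hj1 hj2, mk_add_sub_one_eq_negPosEquiv_inr hj1 hj2,
    mk_sub_one_eq_negPosEquiv_inl hk1 hk2, mk_add_sub_one_eq_negPosEquiv_inr hk1 hk2,
    hΛ, hΛ, hΛ, hΛ, iotaI_negPosEquiv_inl, iotaI_negPosEquiv_inr]
  simp only [Int.natAbs_neg, Int.natAbs_natCast]
  linear_combination -d (j - 1 + 1) * exchangeMatrix_inv_fold_apply hCinv hpos
    ⟨j - 1, by omega⟩ ⟨k - 1, by omega⟩
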